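/- arXiv:1307.5188 — 3 statements merged into one kernel-verified Lean document; each statement's English description precedes it below -/
import Mathlib

section
/- For every integer k and every integer n ≥ 1, the poly-Cauchy polynomial of the first kind satisfies C_n^(k)(x) = Σ_{l=0}^{n-1} Σ_{l_1+⋯+l_n=l} ( (n-1)! / (l_1!⋯l_n!(n-1-l)!) ) · B_{l_1}⋯B_{l_n} / (n-l+1)^k + Σ_{j=1}^{n} { Σ_{l=0}^{n-j} Σ_{l_1+⋯+l_n=l} (-1)^j ( (n-1)! / (l_1!⋯l_n!(n-1-l)!) ) · C(n-l, j) · B_{l_1}⋯B_{l_n} / (n-l-j+1)^k } x^j, where the inner sums range over n-tuples of nonnegative integers l_1,…,l_n summing to l. -/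
open PowerSeries Finset

/-- Composition `F(G(t))` of formal power series (intended for `G` with zero
constant term, in which case `coeff n (G ^ m) = 0` for `m > n` and the finite
sum below computes the usual composition). -/
noncomputable def psComp (F G : PowerSeries ℝ) : PowerSeries ℝ :=
  PowerSeries.mk fun n => ∑ m ∈ Finset.range (n + 1),
    (PowerSeries.coeff m F) * (PowerSeries.coeff n (G ^ m))

/-- The formal power series of `log (1 + t)`. -/
noncomputable def logSeries : PowerSeries ℝ :=
  PowerSeries.mk fun n => if n = 0 then 0 else (-1) ^ (n + 1) / n

/-- The polylogarithm factorial function `Lif_k(t) = ∑_{m ≥ 0} t^m / (m! (m+1)^k)`. -/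
noncomputable def Lif (k : ℤ) : PowerSeries ℝ :=
  PowerSeries.mk fun m => 1 / ((m.factorial : ℝ) * ((m : ℝ) + 1) ^ k)

/-- The poly-Cauchy polynomial of the first kind `C_n^{(k)}(x)`, defined by
`Lif_k(log(1+t)) / (1+t)^x = ∑_{n ≥ 0} C_n^{(k)}(x) t^n / n!`, where
`(1+t)^{-x} = exp (-x · log (1+t))`. -/
noncomputable def polyCauchy (k : ℤ) (n : ℕ) (x : ℝ) : ℝ :=
  (n.factorial : ℝ) * PowerSeries.coeff n
    (psComp (Lif k) logSeries *
      psComp (PowerSeries.rescale (-x) (PowerSeries.exp ℝ)) logSeries)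

/-- The (signed) Stirling numbers of the first kind `S₁(l, m)`, defined by
`(log (1+t))^m = m! ∑_{l ≥ m} S₁(l,m) t^l / l!`. -/
noncomputable def S1 (l m : ℕ) : ℝ :=
  (l.factorial : ℝ) / (m.factorial : ℝ) * PowerSeries.coeff l (logSeries ^ m)

/-- The ordinary Bernoulli numbers, via `t/(e^t - 1) = ∑ B_n t^n/n!`;
here `(mk fun m => 1/(m+1)!)` is the series `(e^t - 1)/t`. -/
noncomputable def Bern (n : ℕ) : ℝ :=
  (n.factorial : ℝ) * PowerSeries.coeff n
    (PowerSeries.mk fun m => (1 : ℝ) / (m + 1).factorial)⁻¹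

/-- The Bernoulli polynomial of order `r`, via `(t/(e^t-1))^r e^{xt} = ∑ B_n^{(r)}(x) t^n/n!`. -/
noncomputable def bernPoly (r : ℕ) (n : ℕ) (x : ℝ) : ℝ :=
  (n.factorial : ℝ) * PowerSeries.coeff n
    (((PowerSeries.mk fun m => (1 : ℝ) / (m + 1).factorial)⁻¹) ^ r *
      PowerSeries.rescale x (PowerSeries.exp ℝ))

/-- The series `log(1+t)/t`, so that `t / log(1+t) = Dlog⁻¹`. -/
noncomputable def Dlog : PowerSeries ℝ :=
  PowerSeries.mk fun n => (-1) ^ n / ((n : ℝ) + 1)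

/-- The Cauchy numbers of the first kind, via `t/log(1+t) = ∑ C_n t^n/n!`. -/
noncomputable def cauchyNum (n : ℕ) : ℝ :=
  (n.factorial : ℝ) * PowerSeries.coeff n Dlog⁻¹

/-- The numbers `T_n^{(r,k)}`, via
`(t/log(1+t))^r · Lif_k(log(1+t)) = ∑ T_n^{(r,k)} t^n/n!`. -/
noncomputable def T (r : ℕ) (k : ℤ) (n : ℕ) : ℝ :=
  (n.factorial : ℝ) * PowerSeries.coeff n (Dlog⁻¹ ^ r * psComp (Lif k) logSeries)

/-- The rising factorial `x^{(m)} = x (x+1) ⋯ (x+m-1)`. -/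
noncomputable def risingFactorial (x : ℝ) (m : ℕ) : ℝ :=
  ∏ i ∈ Finset.range m, (x + i)

/-- Carlitz's polynomials `β_n^{(r)}(x)`, via `(t/log(1+t))^r (1+t)^x = ∑ β_n^{(r)}(x) t^n/n!`,
where `(1+t)^x = exp (x log (1+t))`. -/
noncomputable def carlitz (r : ℕ) (n : ℕ) (x : ℝ) : ℝ :=
  (n.factorial : ℝ) * PowerSeries.coeff n
    (Dlog⁻¹ ^ r * psComp (PowerSeries.rescale x (PowerSeries.exp ℝ)) logSeries)

/-!
Expanding `Lif_k(L) · exp(-x L)` with `L = log(1+t)` gives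
`C_n^{(k)}(x) = n! ∑_{i,j} [t^i] Lif_k · (-x)^j/j! · [t^n] L^{i+j}`.
Since `L` is the compositional inverse of `e^t - 1`, Lagrange inversion gives
`n [t^n] L^m = m [t^{n-m}] G^n` for `G = t/(e^t-1)`, and the coefficients of `G^n` are the
multinomial sums of products of Bernoulli numbers.
We prove this instance of Lagrange inversion by induction on `n`: the differential equations
`(1+t) L' = 1` and `t G' = G - t G - G²` give two-term recurrences for the coefficients of `L^m`
and `G^n`, and the two sides satisfy the same one.
-/
section PowerSeriesFacts

variable {R : Type*} [CommSemiring R] {φ : R⟦X⟧}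

lemma coeff_pow_eq_zero_of_lt (hφ : constantCoeff φ = 0) {d m : ℕ} (h : d < m) :
    coeff d (φ ^ m) = 0 := by
  obtain ⟨ψ, rfl⟩ := X_dvd_iff.mpr hφ
  rw [mul_pow, coeff_X_pow_mul', if_neg (by omega)]

lemma coeff_pow_self_of_constantCoeff_eq_zero (hφ : constantCoeff φ = 0) (n : ℕ) :
    coeff n (φ ^ n) = coeff 1 φ ^ n := by
  obtain ⟨ψ, rfl⟩ := X_dvd_iff.mpr hφ
  rw [mul_pow, coeff_X_pow_mul', if_pos le_rfl, Nat.sub_self, coeff_zero_eq_constantCoeff,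
    map_pow, coeff_succ_X_mul, coeff_zero_eq_constantCoeff]

lemma coeff_X_mul_derivative (n : ℕ) : coeff n (X * d⁄dX R φ) = n * coeff n φ := by
  cases n with
  | zero => simp
  | succ n =>
    rw [coeff_succ_X_mul, coeff_derivative, mul_comm]
    push_cast
    ring

lemma coeff_pow_eq_sum_antidiagonalTuple (N l : ℕ) :
    coeff l (φ ^ N) = ∑ f ∈ Nat.antidiagonalTuple N l, ∏ i, coeff (f i) φ := by
  rw [← Fin.prod_const, coeff_prod]
  exact sum_equiv Finsupp.equivFunOnFinite (by simp [Nat.mem_antidiagonalTuple]) (by simp)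

end PowerSeriesFacts

lemma coeff_psComp_eq_coeff_sum_smul_pow {F G : ℝ⟦X⟧} (hG : constantCoeff G = 0) {d N : ℕ}
    (hd : d ≤ N) :
    coeff d (psComp F G) = coeff d (∑ i ∈ range (N + 1), coeff i F • G ^ i) := by
  rw [psComp, coeff_mk, map_sum]
  simp only [coeff_smul, smul_eq_mul]
  refine sum_subset (range_subset_range.mpr (by omega)) fun i _ hi => ?_
  rw [coeff_pow_eq_zero_of_lt hG (by simp at hi; omega), mul_zero]

lemma coeff_psComp_mul_psComp {F H G : ℝ⟦X⟧} (hG : constantCoeff G = 0) (n : ℕ) :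
    coeff n (psComp F G * psComp H G) =
      ∑ i ∈ range (n + 1), ∑ j ∈ range (n + 1), coeff i F * coeff j H * coeff n (G ^ (i + j)) := by
  have htrunc : coeff n (psComp F G * psComp H G) = coeff n
      ((∑ i ∈ range (n + 1), coeff i F • G ^ i) * ∑ j ∈ range (n + 1), coeff j H • G ^ j) := by
    rw [coeff_mul, coeff_mul]
    refine sum_congr rfl fun p hp => ?_
    rw [HasAntidiagonal.mem_antidiagonal] at hp
    rw [coeff_psComp_eq_coeff_sum_smul_pow hG (by omega : p.1 ≤ n),
      coeff_psComp_eq_coeff_sum_smul_pow hG (by omega : p.2 ≤ n)]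
  simp only [htrunc, sum_mul_sum, smul_mul_smul_comm, ← pow_add, map_sum, coeff_smul, smul_eq_mul]

lemma constantCoeff_logSeries : constantCoeff logSeries = 0 := by
  simp [logSeries]

lemma coeff_one_logSeries : coeff 1 logSeries = 1 := by
  simp [logSeries]

lemma one_add_X_mul_derivative_logSeries : (1 + X) * d⁄dX ℝ logSeries = 1 := by
  ext n
  rw [add_mul, one_mul, map_add]
  cases n with
  | zero => simp [coeff_derivative, coeff_one_logSeries]
  | succ n =>
    rw [coeff_succ_X_mul, coeff_derivative, coeff_derivative, coeff_one, if_neg n.succ_ne_zero]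
    simp only [logSeries, coeff_mk, if_neg (Nat.succ_ne_zero _)]
    push_cast
    field_simp
    ring

lemma coeff_logSeries_pow_recurrence (m N : ℕ) :
    (N + 1) * coeff (N + 1) (logSeries ^ (m + 1)) + N * coeff N (logSeries ^ (m + 1)) =
      (m + 1) * coeff N (logSeries ^ m) := by
  have hode : (1 + X) * d⁄dX ℝ (logSeries ^ (m + 1)) = (m + 1) • logSeries ^ m := by
    rw [Derivation.leibniz_pow, Nat.add_sub_cancel, smul_eq_mul, mul_smul_comm, mul_left_comm,
      one_add_X_mul_derivative_logSeries, mul_one]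
  have h := congrArg (fun f => coeff (N + 1) (X * f)) hode
  rw [add_mul, one_mul, mul_add, map_add, coeff_X_mul_derivative, coeff_succ_X_mul,
    coeff_X_mul_derivative, coeff_succ_X_mul, map_nsmul, nsmul_eq_mul] at h
  exact_mod_cast h

noncomputable def expSubOneDivX : ℝ⟦X⟧ := mk fun m => (1 : ℝ) / (m + 1).factorial

noncomputable def bernoulliGF : ℝ⟦X⟧ := expSubOneDivX⁻¹

lemma constantCoeff_expSubOneDivX : constantCoeff expSubOneDivX = 1 := by
  simp [expSubOneDivX]

lemma X_mul_derivative_expSubOneDivX :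
    X * d⁄dX ℝ expSubOneDivX = 1 + X * expSubOneDivX - expSubOneDivX := by
  ext n
  rw [coeff_X_mul_derivative, map_sub, map_add]
  cases n with
  | zero => simp [constantCoeff_expSubOneDivX]
  | succ n =>
    rw [coeff_succ_X_mul, coeff_one, if_neg n.succ_ne_zero]
    simp only [expSubOneDivX, coeff_mk, Nat.factorial_succ (n + 1)]
    push_cast
    field_simp
    ring

lemma constantCoeff_bernoulliGF : constantCoeff bernoulliGF = 1 := by
  rw [bernoulliGF, constantCoeff_inv, constantCoeff_expSubOneDivX, inv_one]

lemma X_mul_derivative_bernoulliGF :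
    X * d⁄dX ℝ bernoulliGF = bernoulliGF - X * bernoulliGF - bernoulliGF ^ 2 := by
  have hinv : expSubOneDivX * bernoulliGF = 1 :=
    PowerSeries.mul_inv_cancel _ (by simp [constantCoeff_expSubOneDivX])
  calc X * d⁄dX ℝ bernoulliGF = -bernoulliGF ^ 2 * (X * d⁄dX ℝ expSubOneDivX) := by
        rw [bernoulliGF, derivative_inv']; ring
    _ = (expSubOneDivX * bernoulliGF) * bernoulliGF
          - X * ((expSubOneDivX * bernoulliGF) * bernoulliGF) - bernoulliGF ^ 2 := by
        rw [X_mul_derivative_expSubOneDivX]; ring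
    _ = bernoulliGF - X * bernoulliGF - bernoulliGF ^ 2 := by rw [hinv, one_mul]

lemma X_mul_derivative_bernoulliGF_pow (n : ℕ) :
    X * d⁄dX ℝ (bernoulliGF ^ n) =
      n • (bernoulliGF ^ n - X * bernoulliGF ^ n - bernoulliGF ^ (n + 1)) := by
  cases n with
  | zero => simp
  | succ n =>
    rw [Derivation.leibniz_pow, Nat.add_sub_cancel, smul_eq_mul, mul_smul_comm, mul_left_comm,
      X_mul_derivative_bernoulliGF]
    ring_nf

lemma coeff_bernoulliGF_pow_recurrence (n l : ℕ) :
    (l + 1) * coeff (l + 1) (bernoulliGF ^ n) =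
      n * (coeff (l + 1) (bernoulliGF ^ n) - coeff l (bernoulliGF ^ n)
        - coeff (l + 1) (bernoulliGF ^ (n + 1))) := by
  have h := congrArg (coeff (l + 1)) (X_mul_derivative_bernoulliGF_pow n)
  rw [coeff_X_mul_derivative, map_nsmul, map_sub, map_sub, coeff_succ_X_mul, nsmul_eq_mul] at h
  exact_mod_cast h

theorem natCast_mul_coeff_logSeries_pow {m n : ℕ} (hmn : m ≤ n) :
    (n : ℝ) * coeff n (logSeries ^ m) = m * coeff (n - m) (bernoulliGF ^ n) := by
  induction n generalizing m with
  | zero => simp [Nat.le_zero.mp hmn]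
  | succ n ih =>
    rcases m with _ | m
    · simp
    rcases (Nat.le_of_succ_le_succ hmn).eq_or_lt with rfl | hlt
    · rw [coeff_pow_self_of_constantCoeff_eq_zero constantCoeff_logSeries, coeff_one_logSeries,
        Nat.sub_self, coeff_zero_eq_constantCoeff, map_pow, constantCoeff_bernoulliGF]
    obtain ⟨l, rfl⟩ : ∃ l, n = m + l + 1 := ⟨n - m - 1, by omega⟩
    have ih₀ := ih (m := m) (by omega)
    have ih₁ := ih (m := m + 1) (by omega)
    have hrec := coeff_logSeries_pow_recurrence m (m + l + 1)
    have hnor := coeff_bernoulliGF_pow_recurrence (m + l + 1) l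
    rw [show m + l + 1 - m = l + 1 by omega] at ih₀
    rw [show m + l + 1 - (m + 1) = l by omega] at ih₁
    rw [show m + l + 1 + 1 - (m + 1) = l + 1 by omega]
    have hn : ((m + l + 1 : ℕ) : ℝ) ≠ 0 := by positivity
    apply mul_left_cancel₀ hn
    push_cast at *
    linear_combination
      (↑m + ↑l + 1) * hrec + (↑m + 1) * ih₀ - (↑m + ↑l + 1) * ih₁ - (↑m + 1) * hnor

lemma sum_mul_coeff_logSeries_pow_add (a : ℕ → ℝ) {n j : ℕ} (hn : n ≠ 0) (hj : j ≤ n) :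
    ∑ i ∈ range (n + 1), a i * coeff n (logSeries ^ (i + j)) =
      ∑ l ∈ range (n - j + 1), a (n - j - l) * (((n : ℝ) - l) / n) * coeff l (bernoulliGF ^ n) := by
  rw [← sum_subset (range_subset_range.mpr (by omega : n - j + 1 ≤ n + 1)) fun i _ hi => by
      rw [coeff_pow_eq_zero_of_lt constantCoeff_logSeries (by simp at hi; omega), mul_zero],
    ← sum_range_reflect]
  refine sum_congr rfl fun l hl => ?_
  rw [mem_range] at hl
  have hlag := natCast_mul_coeff_logSeries_pow (show n - j - l + j ≤ n by omega)
  rw [show n - (n - j - l + j) = l by omega, show n - j - l + j = n - l by omega,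
    Nat.cast_sub (by omega)] at hlag
  rw [show n - j + 1 - 1 - l = n - j - l by omega, show n - j - l + j = n - l by omega,
    mul_assoc, div_mul_eq_mul_div, ← hlag, mul_div_cancel_left₀ _ (Nat.cast_ne_zero.mpr hn)]

lemma polyCauchy_eq_sum_coeff_bernoulliGF_pow (k : ℤ) {n : ℕ} (hn : n ≠ 0) (x : ℝ) :
    polyCauchy k n x = n.factorial * ∑ j ∈ range (n + 1), ∑ l ∈ range (n - j + 1),
      coeff (n - j - l) (Lif k) * coeff j (rescale (-x) (exp ℝ)) * (((n : ℝ) - l) / n) *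
        coeff l (bernoulliGF ^ n) := by
  rw [polyCauchy, coeff_psComp_mul_psComp constantCoeff_logSeries, sum_comm]
  congr 1
  refine sum_congr rfl fun j hj => ?_
  exact sum_mul_coeff_logSeries_pow_add
    (fun i => coeff i (Lif k) * coeff j (rescale (-x) (exp ℝ))) hn (by simpa using hj)

lemma coeff_bernoulliGF_pow_eq_sum_prod_Bern (N l : ℕ) :
    coeff l (bernoulliGF ^ N) =
      ∑ f ∈ Nat.antidiagonalTuple N l, (∏ i, Bern (f i)) / ∏ i, ((f i).factorial : ℝ) := by
  rw [coeff_pow_eq_sum_antidiagonalTuple]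
  refine sum_congr rfl fun f _ => ?_
  rw [← prod_div_distrib]
  refine prod_congr rfl fun i _ => ?_
  rw [Bern, mul_div_cancel_left₀ _ (by positivity)]
  rfl

lemma factorial_mul_coeff_Lif_mul_coeff_exp (k : ℤ) (x : ℝ) {n l j : ℕ} (hl : l < n)
    (hj : j ≤ n - l) :
    n.factorial *
        (coeff (n - j - l) (Lif k) * coeff j (rescale (-x) (exp ℝ)) * (((n : ℝ) - l) / n)) =
      (-1) ^ j * (((n - 1).factorial : ℝ) / (n - 1 - l).factorial) * ((n - l).choose j : ℝ) /
          ((n : ℝ) - l - j + 1) ^ k * x ^ j := by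
  have hn : (n.factorial : ℝ) = n * (n - 1).factorial := by
    rw [← Nat.cast_mul, Nat.mul_factorial_pred (by omega)]
  have hnl : ((n - l).factorial : ℝ) = ((n : ℝ) - l) * (n - 1 - l).factorial := by
    rw [← Nat.cast_sub hl.le, ← Nat.cast_mul, show n - 1 - l = n - l - 1 by omega,
      Nat.mul_factorial_pred (by omega)]
  have hi : ((n - j - l : ℕ) : ℝ) = n - l - j := by
    rw [Nat.cast_sub (by omega), Nat.cast_sub (by omega)]; ring
  have hw : ((n : ℝ) - l - j + 1) ^ k ≠ 0 := by
    rw [← hi]; positivity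
  have hnl0 : (n : ℝ) - l ≠ 0 := by
    rw [sub_ne_zero]; exact_mod_cast hl.ne'
  have hn0 : (n : ℝ) ≠ 0 := Nat.cast_ne_zero.mpr (by omega)
  simp only [Lif, coeff_mk, coeff_rescale, coeff_exp, map_div₀, map_one, map_natCast, hi]
  rw [Nat.cast_choose ℝ hj, hnl, hn, show n - l - j = n - j - l by omega, neg_pow]
  field_simp

/-- Theorem 1 of the paper. -/
theorem polyCauchy_eq_bernoulli_multinomial_sum (k : ℤ) (n : ℕ) (hn : 1 ≤ n) (x : ℝ) :
    polyCauchy k n x =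
      (∑ l ∈ Finset.range n, ∑ f ∈ Finset.Nat.antidiagonalTuple n l,
        ((n - 1).factorial : ℝ) /
            ((∏ i, ((f i).factorial : ℝ)) * ((n - 1 - l).factorial : ℝ)) *
          (∏ i, Bern (f i)) / ((n : ℝ) - l + 1) ^ k) +
      ∑ j ∈ Finset.Icc 1 n,
        (∑ l ∈ Finset.range (n - j + 1), ∑ f ∈ Finset.Nat.antidiagonalTuple n l,
          (-1 : ℝ) ^ j *
            (((n - 1).factorial : ℝ) /
              ((∏ i, ((f i).factorial : ℝ)) * ((n - 1 - l).factorial : ℝ))) *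
            ((n - l).choose j : ℝ) *
            (∏ i, Bern (f i)) / ((n : ℝ) - l - j + 1) ^ k) * x ^ j := by
  rw [polyCauchy_eq_sum_coeff_bernoulliGF_pow k (by omega), Nat.range_succ_eq_Icc_zero,
    ← insert_Icc_succ_left_eq_Icc n.zero_le, sum_insert (by simp), mul_add,
    Order.succ_eq_add_one, zero_add]
  congr 1
  · rw [show n - 0 + 1 = n + 1 from rfl, sum_range_succ, sub_self, zero_div, mul_zero, zero_mul,
      add_zero, mul_sum]
    refine sum_congr rfl fun l hl => ?_
    rw [← mul_assoc, factorial_mul_coeff_Lif_mul_coeff_exp k x (mem_range.mp hl) (by omega),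
      coeff_bernoulliGF_pow_eq_sum_prod_Bern, mul_sum]
    refine sum_congr rfl fun f _ => ?_
    simp only [pow_zero, Nat.choose_zero_right, Nat.cast_zero, Nat.cast_one, sub_zero]
    ring
  · rw [mul_sum]
    refine sum_congr rfl fun j hj => ?_
    rw [mul_sum, sum_mul]
    refine sum_congr rfl fun l hl => ?_
    have := mem_Icc.mp hj
    have := mem_range.mp hl
    rw [← mul_assoc, factorial_mul_coeff_Lif_mul_coeff_exp k x (by omega) (by omega),
      coeff_bernoulliGF_pow_eq_sum_prod_Bern, mul_sum, sum_mul]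
    refine sum_congr rfl fun f _ => ?_
    ring
end

section
/- For every integer k and every integer n ≥ 1, the n-th poly-Cauchy number of the first kind satisfies C_n^(k) = Σ_{m=0}^{n} S₁(n,m)/(m+1)^k. -/
open PowerSeries Finset

/-!
At `x = 0` the factor `(1+t)^{-x}` is `1`, so `C_n^{(k)} = n! [tⁿ] Lif_k(log(1+t))
= ∑ₘ n! [tⁿ] (log(1+t))^m / (m! (m+1)^k)`, and `n! [tⁿ] (log(1+t))^m / m!` is `S₁(n,m)`.
-/

lemma coeff_psComp (F G : PowerSeries ℝ) (n : ℕ) :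
    coeff n (psComp F G) = ∑ m ∈ range (n + 1), coeff m F * coeff n (G ^ m) :=
  coeff_mk _ _

lemma psComp_one (G : PowerSeries ℝ) : psComp 1 G = 1 := by
  ext n
  rw [coeff_psComp, sum_eq_single_of_mem 0 (mem_range.mpr n.succ_pos)]
  · simp [coeff_one]
  · intro m _ hm
    simp [coeff_one, hm]

lemma rescale_zero_exp : rescale (0 : ℝ) (exp ℝ) = 1 := by
  simp [rescale_zero, exp]

lemma polyCauchy_zero (k : ℤ) (n : ℕ) :
    polyCauchy k n 0 = n.factorial * coeff n (psComp (Lif k) logSeries) := by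
  rw [polyCauchy, neg_zero, rescale_zero_exp, psComp_one, mul_one]

theorem polyCauchyNumber_eq_stirling_sum_general (k : ℤ) (n : ℕ) :
    polyCauchy k n 0 = ∑ m ∈ Finset.range (n + 1), S1 n m / ((m : ℝ) + 1) ^ k := by
  rw [polyCauchy_zero, coeff_psComp, mul_sum]
  refine sum_congr rfl fun m _ => ?_
  have hm : (m.factorial : ℝ) ≠ 0 := Nat.cast_ne_zero.mpr m.factorial_ne_zero
  have hk : ((m : ℝ) + 1) ^ k ≠ 0 := zpow_ne_zero _ (by positivity)
  simp only [Lif, S1, coeff_mk]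
  field_simp

/-- part of Theorem 2 of the paper. -/
theorem polyCauchyNumber_eq_stirling_sum (k : ℤ) (n : ℕ) (hn : 1 ≤ n) :
    polyCauchy k n 0 = ∑ m ∈ Finset.range (n + 1), S1 n m / ((m : ℝ) + 1) ^ k :=
  polyCauchyNumber_eq_stirling_sum_general k n
end

section
/- For every integer k and integers n ≥ m ≥ 1, the n-th poly-Cauchy number of the first kind satisfies C_n^(k) = Σ_{a=1}^{m} Σ_{l=0}^{a} Σ_{s=0}^{n-m+a} (-1)^s C(m+s-1, s) · ( (n-m)! / (n-m+a-s)! ) · S₁(m,a) S₁(a+1, l+1) T_{n-m+a-s}^{(a, k-l)}. -/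
open PowerSeries Finset

/-!
With `L = log (1 + t)` we have `Lif_k(L) = ∑_p L^p / (p! (p+1)^k)`, so everything reduces to
expanding `n! [tⁿ] L^p`. Since `L' = (1+t)⁻¹`, differentiating `m` times gives the Faà di Bruno
formula `D^m L^p = (1+t)^{-m} ∑_a S₁(m,a) p(p-1)⋯(p-a+1) L^{p-a}`, whose coefficient of `t^{n-m}`
is `n!/(n-m)! [tⁿ] L^p`. Writing `L^{p-a} = t^a (t/L)^a L^p` shifts the index by `a`, and
`p(p-1)⋯(p-a+1) = ∑_l S₁(a+1,l+1) (p+1)^l` turns the weight `(p+1)^{-k}` into `(p+1)^{-(k-l)}`,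
so that summing over `p` reassembles `T_{n-m+a-s}^{(a,k-l)}`.
-/

-- The series of `(1 + t)^{-m}`; for `m = 0` the truncated `m + s - 1` still gives `1`.
noncomputable def invOneAddXPow (m : ℕ) : PowerSeries ℝ :=
  mk fun s => (-1 : ℝ) ^ s * ((m + s - 1).choose s : ℝ)

lemma coeff_invOneAddXPow (m s : ℕ) :
    coeff s (invOneAddXPow m) = (-1 : ℝ) ^ s * ((m + s - 1).choose s : ℝ) :=
  coeff_mk _ _

lemma invOneAddXPow_zero : invOneAddXPow 0 = 1 := by
  ext (_ | s) <;> simp [coeff_invOneAddXPow]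

lemma coeff_one_add_X_mul_succ {R : Type*} [Semiring R] (F : PowerSeries R) (j : ℕ) :
    coeff (j + 1) ((1 + X) * F) = coeff (j + 1) F + coeff j F := by
  rw [add_mul, one_mul, map_add, coeff_succ_X_mul]

lemma one_add_X_mul_invOneAddXPow_succ (m : ℕ) :
    (1 + X) * invOneAddXPow (m + 1) = invOneAddXPow m := by
  ext (_ | j)
  · rw [add_mul, one_mul, map_add, coeff_zero_X_mul, add_zero, coeff_invOneAddXPow,
      coeff_invOneAddXPow]
    simp
  · rw [coeff_one_add_X_mul_succ, coeff_invOneAddXPow, coeff_invOneAddXPow,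
      coeff_invOneAddXPow, show m + 1 + (j + 1) - 1 = m + j + 1 by omega,
      show m + 1 + j - 1 = m + j by omega, show m + (j + 1) - 1 = m + j by omega,
      Nat.choose_succ_succ]
    push_cast
    ring

lemma invOneAddXPow_succ (m : ℕ) :
    invOneAddXPow (m + 1) = invOneAddXPow m * invOneAddXPow 1 := by
  have h1 : (1 + X) * invOneAddXPow 1 = 1 := by
    rw [one_add_X_mul_invOneAddXPow_succ, invOneAddXPow_zero]
  calc invOneAddXPow (m + 1) = invOneAddXPow (m + 1) * ((1 + X) * invOneAddXPow 1) := by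
        rw [h1, mul_one]
    _ = invOneAddXPow m * invOneAddXPow 1 := by
        rw [← one_add_X_mul_invOneAddXPow_succ m]; ring

lemma derivative_invOneAddXPow (m : ℕ) :
    d⁄dX ℝ (invOneAddXPow m) = (-(m : ℝ)) • invOneAddXPow (m + 1) := by
  ext j
  rw [coeff_derivative, map_smul, coeff_invOneAddXPow, coeff_invOneAddXPow, smul_eq_mul,
    show m + (j + 1) - 1 = m + j by omega, show m + 1 + j - 1 = m + j by omega]
  have h := Nat.choose_succ_right_eq (m + j) j
  rw [show m + j - j = m by omega] at h
  have h' : ((m + j).choose (j + 1) : ℝ) * (j + 1) = (m + j).choose j * m := by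
    exact_mod_cast h
  linear_combination (-(-1 : ℝ) ^ j) * h'

lemma coeff_invOneAddXPow_mul (m N : ℕ) (W : PowerSeries ℝ) :
    coeff N (invOneAddXPow m * W) =
      ∑ s ∈ range (N + 1), (-1 : ℝ) ^ s * ((m + s - 1).choose s : ℝ) * coeff (N - s) W := by
  rw [coeff_mul, Nat.sum_antidiagonal_eq_sum_range_succ_mk]
  simp only [coeff_invOneAddXPow]

lemma logSeries_eq_X_mul_Dlog : logSeries = X * Dlog := by
  ext (_ | n)
  · simp [logSeries]
  · rw [coeff_succ_X_mul]
    simp only [logSeries, Dlog, coeff_mk, Nat.succ_ne_zero, if_false]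
    push_cast
    ring

lemma derivative_logSeries : d⁄dX ℝ logSeries = invOneAddXPow 1 := by
  ext j
  rw [coeff_derivative, coeff_invOneAddXPow]
  simp only [logSeries, coeff_mk, Nat.succ_ne_zero, if_false, add_tsub_cancel_left,
    Nat.choose_self]
  push_cast
  field_simp
  ring

lemma derivative_logSeries_pow (q : ℕ) :
    d⁄dX ℝ (logSeries ^ q) = (q : PowerSeries ℝ) * logSeries ^ (q - 1) * invOneAddXPow 1 := by
  rw [Derivation.leibniz_pow, derivative_logSeries, smul_eq_mul, nsmul_eq_mul, mul_assoc]

lemma coeff_mul_logSeries_pow_of_lt (A : PowerSeries ℝ) {N p : ℕ} (h : N < p) :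
    coeff N (A * logSeries ^ p) = 0 := by
  rw [logSeries_eq_X_mul_Dlog, mul_pow, mul_left_comm, coeff_X_pow_mul', if_neg (by omega)]

lemma invDlog_pow_mul_logSeries_pow {a p : ℕ} (h : a ≤ p) :
    Dlog⁻¹ ^ a * logSeries ^ p = X ^ a * logSeries ^ (p - a) := by
  have hD : Dlog⁻¹ * Dlog = 1 :=
    PowerSeries.inv_mul_cancel _ (by simp [Dlog, ← coeff_zero_eq_constantCoeff_apply])
  obtain ⟨q, rfl⟩ := Nat.exists_eq_add_of_le h
  rw [Nat.add_sub_cancel_left, pow_add, logSeries_eq_X_mul_Dlog, mul_pow,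
    ← mul_assoc, ← mul_assoc, mul_comm _ (X ^ a), mul_assoc (X ^ a), ← mul_pow, hD, one_pow,
    mul_one]

lemma coeff_one_add_X_mul_derivative {R : Type*} [CommSemiring R] (G : PowerSeries R)
    (q : ℕ) : coeff q ((1 + X) * d⁄dX R G) = (q + 1) * coeff (q + 1) G + q * coeff q G := by
  rw [add_mul, one_mul, map_add, coeff_derivative]
  cases q with
  | zero => simp
  | succ q => rw [coeff_succ_X_mul, coeff_derivative]; push_cast; ring

lemma S1_zero_zero : S1 0 0 = 1 := by simp [S1]

lemma S1_succ_zero (m : ℕ) : S1 (m + 1) 0 = 0 := by simp [S1, coeff_one]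

lemma S1_eq_zero_of_lt {m a : ℕ} (h : m < a) : S1 m a = 0 := by
  rw [S1, ← one_mul (logSeries ^ a), coeff_mul_logSeries_pow_of_lt _ h, mul_zero]

lemma natCast_mul_S1_zero (m : ℕ) : (m : ℝ) * S1 m 0 = 0 := by
  cases m with
  | zero => simp
  | succ m => rw [S1_succ_zero, mul_zero]

lemma S1_succ_succ (m b : ℕ) : S1 (m + 1) (b + 1) = S1 m b - m * S1 m (b + 1) := by
  have h := congrArg (coeff m) (congrArg ((1 + X) * ·) (derivative_logSeries_pow (b + 1)))
  simp only [Nat.add_sub_cancel] at h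
  rw [coeff_one_add_X_mul_derivative, show (1 + X) * (((b + 1 : ℕ) : PowerSeries ℝ) *
      logSeries ^ b * invOneAddXPow 1) = ((b + 1 : ℕ) : PowerSeries ℝ) * logSeries ^ b *
      ((1 + X) * invOneAddXPow 1) by ring, one_add_X_mul_invOneAddXPow_succ,
    invOneAddXPow_zero, mul_one, ← map_natCast (C (R := ℝ)), coeff_C_mul] at h
  simp only [S1, Nat.factorial_succ]
  push_cast at h ⊢
  field_simp
  linear_combination h

lemma sum_S1_succ_smul {M : Type*} [AddCommGroup M] [Module ℝ M] (m : ℕ) (g : ℕ → M) :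
    ∑ a ∈ range (m + 2), S1 (m + 1) a • g a =
      ∑ a ∈ range (m + 1), S1 m a • g (a + 1) - (m : ℝ) • ∑ a ∈ range (m + 1), S1 m a • g a := by
  have hshift : ∑ a ∈ range (m + 1), S1 m (a + 1) • g (a + 1) =
      ∑ a ∈ range (m + 1), S1 m a • g a - S1 m 0 • g 0 := by
    rw [eq_sub_iff_add_eq, ← sum_range_succ' (fun a => S1 m a • g a), sum_range_succ,
      S1_eq_zero_of_lt (Nat.lt_succ_self m), zero_smul, add_zero]
  rw [sum_range_succ' _ (m + 1), S1_succ_zero, zero_smul, add_zero]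
  simp only [S1_succ_succ, sub_smul, sum_sub_distrib]
  simp only [mul_smul]
  rw [← smul_sum, hshift, smul_sub, smul_smul, natCast_mul_S1_zero, zero_smul, sub_zero]

lemma sum_S1_mul_pow (q : ℕ) (x : ℝ) :
    ∑ l ∈ range (q + 1), S1 q l * x ^ l = (descPochhammer ℝ q).eval x := by
  induction q with
  | zero => simp [S1_zero_zero]
  | succ q ih =>
    have h := sum_S1_succ_smul q (fun l => x ^ l)
    simp only [smul_eq_mul, pow_succ, ← mul_assoc, ← sum_mul, ih] at h
    rw [h, descPochhammer_succ_eval]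
    ring

lemma sum_S1_succ_succ_mul_pow (a p : ℕ) :
    ∑ l ∈ range (a + 1), S1 (a + 1) (l + 1) * ((p : ℝ) + 1) ^ l = p.descFactorial a := by
  have h := sum_S1_mul_pow (a + 1) ((p + 1 : ℕ) : ℝ)
  rw [descPochhammer_eval_eq_descFactorial, Nat.succ_descFactorial_succ, sum_range_succ',
    S1_succ_zero, zero_mul, add_zero] at h
  push_cast at h
  simp only [pow_succ, ← mul_assoc, ← sum_mul] at h
  rw [mul_comm _ ((p.descFactorial a : ℕ) : ℝ)] at h
  exact mul_right_cancel₀ (Nat.cast_add_one_ne_zero p) h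

lemma derivative_descFactorial_mul_logSeries_pow (p a : ℕ) :
    d⁄dX ℝ ((p.descFactorial a : PowerSeries ℝ) * logSeries ^ (p - a)) =
      invOneAddXPow 1 *
        ((p.descFactorial (a + 1) : PowerSeries ℝ) * logSeries ^ (p - (a + 1))) := by
  rw [Derivation.leibniz, Derivation.map_natCast, smul_zero, add_zero, smul_eq_mul,
    derivative_logSeries_pow, Nat.sub_sub, Nat.descFactorial_succ, Nat.cast_mul]
  ring

lemma iterate_derivative_logSeries_pow (m p : ℕ) :
    (d⁄dX ℝ)^[m] (logSeries ^ p) = invOneAddXPow m * ∑ a ∈ range (m + 1),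
      S1 m a • ((p.descFactorial a : PowerSeries ℝ) * logSeries ^ (p - a)) := by
  induction m with
  | zero => simp [invOneAddXPow_zero, S1_zero_zero]
  | succ m ih =>
    have hsum : d⁄dX ℝ (∑ a ∈ range (m + 1),
          S1 m a • ((p.descFactorial a : PowerSeries ℝ) * logSeries ^ (p - a))) =
        invOneAddXPow 1 * ∑ a ∈ range (m + 1),
          S1 m a • ((p.descFactorial (a + 1) : PowerSeries ℝ) * logSeries ^ (p - (a + 1))) := by
      simp only [map_sum, Derivation.map_smul, derivative_descFactorial_mul_logSeries_pow,
        mul_sum, mul_smul_comm]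
    rw [Function.iterate_succ_apply', ih, Derivation.leibniz, hsum, derivative_invOneAddXPow,
      sum_S1_succ_smul m (fun a => (p.descFactorial a : PowerSeries ℝ) * logSeries ^ (p - a)),
      invOneAddXPow_succ m]
    have key : ∀ A B : PowerSeries ℝ, invOneAddXPow m • (invOneAddXPow 1 * A) +
        B • (-(m : ℝ)) • (invOneAddXPow m * invOneAddXPow 1) =
          invOneAddXPow m * invOneAddXPow 1 * (A - (m : ℝ) • B) := by
      intro A B
      simp only [smul_eq_mul, smul_eq_C_mul, map_neg]
      ring
    exact key _ _

lemma factorial_mul_coeff_iterate_derivative {R : Type*} [CommSemiring R] (f : PowerSeries R)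
    (j m : ℕ) :
    (j.factorial : R) * coeff j ((d⁄dX R)^[m] f) = ((j + m).factorial : R) * coeff (j + m) f := by
  rw [coeff_iterate_derivative, ← mul_assoc, ← Nat.cast_mul, Nat.factorial_mul_ascFactorial]

lemma coeff_mul_descFactorial_mul_logSeries_pow (A : PowerSeries ℝ) (N p a : ℕ) :
    coeff N (A * ((p.descFactorial a : PowerSeries ℝ) * logSeries ^ (p - a))) =
      p.descFactorial a * coeff (N + a) (A * (Dlog⁻¹ ^ a * logSeries ^ p)) := by
  rw [← map_natCast (C (R := ℝ)), mul_left_comm, coeff_C_mul]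
  rcases le_or_gt a p with h | h
  · rw [invDlog_pow_mul_logSeries_pow h, mul_left_comm, coeff_X_pow_mul]
  · simp [Nat.descFactorial_eq_zero_iff_lt.mpr h]

lemma factorial_mul_coeff_logSeries_pow {n m : ℕ} (p : ℕ) (hm : 1 ≤ m) (hmn : m ≤ n) :
    (n.factorial : ℝ) * coeff n (logSeries ^ p) = ((n - m).factorial : ℝ) *
      ∑ a ∈ Icc 1 m, S1 m a * p.descFactorial a *
        coeff (n - m + a) (invOneAddXPow m * (Dlog⁻¹ ^ a * logSeries ^ p)) := by
  have hS1 : S1 m 0 = 0 := by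
    obtain ⟨m', rfl⟩ := Nat.exists_eq_add_of_le' hm
    exact S1_succ_zero m'
  conv_lhs => rw [← Nat.sub_add_cancel hmn]
  rw [← factorial_mul_coeff_iterate_derivative, iterate_derivative_logSeries_pow, mul_sum,
    map_sum, sum_range_eq_add_Ico _ (by omega), Ico_add_one_right_eq_Icc]
  simp only [mul_smul_comm, coeff_smul, smul_eq_mul, coeff_mul_descFactorial_mul_logSeries_pow,
    hS1, zero_mul, zero_add, mul_assoc]

lemma coeff_psComp_logSeries (F : PowerSeries ℝ) {j M : ℕ} (h : j ≤ M) :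
    coeff j (psComp F logSeries) = ∑ p ∈ range (M + 1), coeff p F * coeff j (logSeries ^ p) := by
  rw [psComp, coeff_mk]
  refine sum_subset (range_subset_range.mpr (by omega)) fun p _ hp => ?_
  rw [← one_mul (logSeries ^ p), coeff_mul_logSeries_pow_of_lt _ (by simp at hp; omega),
    mul_zero]

lemma coeff_mul_psComp_logSeries (A F : PowerSeries ℝ) {N M : ℕ} (h : N ≤ M) :
    coeff N (A * psComp F logSeries) =
      ∑ p ∈ range (M + 1), coeff p F * coeff N (A * logSeries ^ p) := by
  simp only [coeff_mul, mul_sum]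
  rw [sum_comm]
  refine sum_congr rfl fun ij hij => ?_
  rw [coeff_psComp_logSeries F ((HasAntidiagonal.antidiagonal.snd_le hij).trans h), mul_sum]
  exact sum_congr rfl fun _ _ => mul_left_comm _ _ _

lemma polyCauchy_zero_eq_sum (k : ℤ) (n : ℕ) :
    polyCauchy k n 0 =
      ∑ p ∈ range (n + 1), coeff p (Lif k) * (n.factorial * coeff n (logSeries ^ p)) := by
  have h : rescale (-0 : ℝ) (exp ℝ) = 1 := by simp [rescale_zero]
  rw [polyCauchy, h, psComp_one, mul_one, ← one_mul (psComp _ _),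
    coeff_mul_psComp_logSeries _ _ le_rfl, mul_sum]
  simp only [one_mul]
  exact sum_congr rfl fun _ _ => mul_left_comm _ _ _

lemma coeff_Lif_sub (k : ℤ) (l p : ℕ) :
    coeff p (Lif (k - l)) = ((p : ℝ) + 1) ^ l * coeff p (Lif k) := by
  simp only [Lif, coeff_mk]
  rw [zpow_sub₀ (by positivity), zpow_natCast]
  field_simp

lemma factorial_mul_coeff_logSeries_pow_eq_triple_sum {n m : ℕ} (p : ℕ) (hm : 1 ≤ m)
    (hmn : m ≤ n) :
    (n.factorial : ℝ) * coeff n (logSeries ^ p) =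
      ∑ a ∈ Icc 1 m, ∑ l ∈ range (a + 1), ∑ s ∈ range (n - m + a + 1),
        (-1 : ℝ) ^ s * ((m + s - 1).choose s : ℝ) * (n - m).factorial * S1 m a *
          S1 (a + 1) (l + 1) *
          (((p : ℝ) + 1) ^ l * coeff (n - m + a - s) (Dlog⁻¹ ^ a * logSeries ^ p)) := by
  rw [factorial_mul_coeff_logSeries_pow p hm hmn, mul_sum]
  refine sum_congr rfl fun a _ => ?_
  rw [← sum_S1_succ_succ_mul_pow, coeff_invOneAddXPow_mul]
  simp only [mul_sum, sum_mul]
  rw [sum_comm]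
  exact sum_congr rfl fun l _ => sum_congr rfl fun s _ => by ring

/-- Lemma 7 of the paper. -/
theorem polyCauchyNumber_eq_T_triple_sum (k : ℤ) (n m : ℕ) (hm : 1 ≤ m) (hmn : m ≤ n) :
    polyCauchy k n 0 =
      ∑ a ∈ Finset.Icc 1 m, ∑ l ∈ Finset.range (a + 1),
        ∑ s ∈ Finset.range (n - m + a + 1),
          (-1 : ℝ) ^ s * ((m + s - 1).choose s : ℝ) *
            (((n - m).factorial : ℝ) / ((n - m + a - s).factorial : ℝ)) *
            S1 m a * S1 (a + 1) (l + 1) * T a (k - l) (n - m + a - s) := by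
  rw [polyCauchy_zero_eq_sum]
  simp only [factorial_mul_coeff_logSeries_pow_eq_triple_sum _ hm hmn, mul_sum]
  rw [sum_comm]
  refine sum_congr rfl fun a ha => ?_
  rw [sum_comm]
  refine sum_congr rfl fun l _ => ?_
  rw [sum_comm]
  refine sum_congr rfl fun s _ => ?_
  have hN : n - m + a - s ≤ n := by simp at ha; omega
  rw [T, coeff_mul_psComp_logSeries _ _ hN, mul_sum, mul_sum]
  refine sum_congr rfl fun p _ => ?_
  rw [coeff_Lif_sub]
  field_simp
end
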